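/- With K₀(C({-∞,+∞} × S¹)) ≅ ℤ[(1,0)] ⊕ ℤ[(0,1)] and K₁(C₀(ℝ)) ≅ ℤ[e^{2πib}], the exponential map δ₀ : K₀(C({-∞,+∞} × S¹)) → K₁(C₀(ℝ)) of the short exact sequence 0 → C₀(ℝ) → C(X) → C({-∞,+∞} × S¹) → 0 satisfies δ₀([(0,1)]) = -[e^{2πib}] and δ₀([(1,0)]) = -[e^{2πic}] = [e^{2πib}], where b, c : ℝ → [0,1] are continuous with c non-increasing, c = 1 near -∞, c = 0 near +∞, and b = 1 - c. -/
import Mathlib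


open Filter

/-- `IsWinding u w`: the continuous loop `x ↦ u x` on the one-point compactification of `ℝ`
has winding number `w`, computed through a continuous logarithmic lift `β` with limits
`L₊, L₋` at `±∞`, as `w = L₊ - L₋`. -/
def IsWinding (u : ℝ → ℂ) (w : ℤ) : Prop :=
  ∃ (β : ℝ → ℝ) (Lp Lm : ℝ), Continuous β ∧
    (∀ x, u x = Complex.exp (2 * Real.pi * Complex.I * (β x : ℂ))) ∧
    Tendsto β atTop (nhds Lp) ∧ Tendsto β atBot (nhds Lm) ∧ Lp - Lm = (w : ℝ)

/-- for the extension `0 → C₀(ℝ) → C(X) → C({-∞,+∞} × S¹) → 0`, with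
`K₀(C({-∞,+∞} × S¹)) ≅ ℤ[(1,0)] ⊕ ℤ[(0,1)]` (modelled by `ℤ × ℤ`, the pair recording the
values of a projection-valued boundary function on the circles at `-∞` and `+∞`) and
`K₁(C₀(ℝ)) ≅ ℤ[e^{2πib}]` (modelled by `ℤ` via the winding number, so that `[e^{2πib}]`
corresponds to `1`), the exponential map `δ₀` — which satisfies the recipe
`δ₀([p]) = -[e^{2πih}]` for any continuous self-adjoint lift `h` of `p`, encoded here by the
hypothesis `hδ` — satisfies `δ₀([(0,1)]) = -[e^{2πib}]` and
`δ₀([(1,0)]) = -[e^{2πic}] = [e^{2πib}]`, i.e. `δ₀(0,1) = -1` and `δ₀(1,0) = 1`. -/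
theorem stmt15 (c b : ℝ → ℝ)
    (hc_cont : Continuous c) (hc_anti : Antitone c)
    (hc_mem : ∀ x, c x ∈ Set.Icc (0 : ℝ) 1)
    (hc_one : ∀ x : ℝ, x ≤ -(1 / 5) → c x = 1)
    (hc_zero : ∀ x : ℝ, (1 / 5 : ℝ) ≤ x → c x = 0)
    (hb : b = fun x => 1 - c x)
    (δ : ℤ × ℤ →+ ℤ)
    -- the exponential-map recipe: if `h` is a continuous self-adjoint lift of the
    -- boundary projection `(m, n)` and `e^{2πih}` has winding number `w`, then
    -- `δ₀(m, n) = -w` (i.e. `δ₀([p]) = -[e^{2πih}]`)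
    (hδ : ∀ h : ℝ → ℝ, Continuous h → ∀ m n : ℤ,
      Tendsto h atBot (nhds (m : ℝ)) → Tendsto h atTop (nhds (n : ℝ)) →
      ∀ w : ℤ, IsWinding (fun x => Complex.exp (2 * Real.pi * Complex.I * (h x : ℂ))) w →
        δ (m, n) = -w) :
    δ (0, 1) = -1 ∧ δ (1, 0) = 1 := by
  have hcTop : Tendsto c atTop (nhds (0 : ℝ)) := by
    apply Tendsto.congr' _ tendsto_const_nhds
    filter_upwards [eventually_ge_atTop (1/5 : ℝ)] with x hx
    exact (hc_zero x hx).symm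
  have hcBot : Tendsto c atBot (nhds (1 : ℝ)) := by
    apply Tendsto.congr' _ tendsto_const_nhds
    filter_upwards [eventually_le_atBot (-(1/5) : ℝ)] with x hx
    exact (hc_one x hx).symm
  have hbcont : Continuous b := by rw [hb]; exact continuous_const.sub hc_cont
  have hbTop : Tendsto b atTop (nhds (1 : ℝ)) := by
    rw [hb]
    have := tendsto_const_nhds (x := (1:ℝ)) (f := atTop) |>.sub hcTop
    simpa using this
  have hbBot : Tendsto b atBot (nhds (0 : ℝ)) := by
    rw [hb]
    have := tendsto_const_nhds (x := (1:ℝ)) (f := atBot) |>.sub hcBot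
    simpa using this
  constructor
  · have := hδ b hbcont 0 1 (by simpa using hbBot) (by simpa using hbTop) 1
      ⟨b, 1, 0, hbcont, fun x => rfl, hbTop, hbBot, by norm_num⟩
    simpa using this
  · have := hδ c hc_cont 1 0 (by simpa using hcBot) (by simpa using hcTop) (-1)
      ⟨c, 0, 1, hc_cont, fun x => rfl, hcTop, hcBot, by norm_num⟩
    simpa using this
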